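/- arXiv:2603.08526 — 2 statements merged into one kernel-verified Lean document; each statement's English description precedes it below -/
import Mathlib

section
/- Let μ ∈ ℝ^{n_s} and ν ∈ ℝ^{n_t} be probability vectors, T ∈ Π(μ,ν), and let D_s ∈ ℝ^{n_s×n_s} and D_t ∈ ℝ^{n_t×n_t} be arbitrary real matrices. Then for the squared ground cost the Gromov–Wasserstein cost tensor contraction decomposes entrywise as follows: for all indices i ∈ {1,…,n_s} and k ∈ {1,…,n_t}, ∑_{j=1}^{n_s} ∑_{l=1}^{n_t} (D_s(i,j) − D_t(k,l))² · T(j,l) = (D_s^{∘2} μ)(i) + (D_t^{∘2} ν)(k) − 2·(D_s T D_tᵀ)(i,k), where D^{∘2} denotes the entrywise square of the matrix D. -/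
/-- Entrywise decomposition of the Gromov–Wasserstein cost tensor
contraction with squared ground cost:
`∑_{j,l} (D_s(i,j) − D_t(k,l))² T(j,l)
  = (D_s^{∘2} μ)(i) + (D_t^{∘2} ν)(k) − 2 (D_s T D_tᵀ)(i,k)`. -/
theorem gw_cost_entrywise_decomposition {ns nt : ℕ}
    (μ : Fin ns → ℝ) (ν : Fin nt → ℝ)
    (hμ0 : ∀ i, 0 ≤ μ i) (hμ1 : ∑ i, μ i = 1)
    (hν0 : ∀ k, 0 ≤ ν k) (hν1 : ∑ k, ν k = 1)
    (T : Matrix (Fin ns) (Fin nt) ℝ)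
    (hT0 : ∀ i k, 0 ≤ T i k)
    (hTrow : ∀ i, ∑ k, T i k = μ i)
    (hTcol : ∀ k, ∑ i, T i k = ν k)
    (Ds : Matrix (Fin ns) (Fin ns) ℝ) (Dt : Matrix (Fin nt) (Fin nt) ℝ) :
    ∀ i k, ∑ j, ∑ l, (Ds i j - Dt k l) ^ 2 * T j l =
      (Ds.map (fun x => x ^ 2)).mulVec μ i + (Dt.map (fun x => x ^ 2)).mulVec ν k
        - 2 * (Ds * T * Dt.transpose) i k := by
  intro i k
  have h1 : ∑ j, ∑ l, (Ds i j - Dt k l) ^ 2 * T j l =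
      ∑ j, ∑ l, ((Ds i j)^2 * T j l + (Dt k l)^2 * T j l - 2 * (Ds i j * T j l * Dt k l)) := by
    refine Finset.sum_congr rfl fun j _ => Finset.sum_congr rfl fun l _ => ?_
    ring
  rw [h1]
  simp only [Finset.sum_sub_distrib, Finset.sum_add_distrib, Matrix.mulVec, Matrix.mul_apply,
    Matrix.map_apply, Matrix.transpose_apply, dotProduct, ← Finset.mul_sum,
    ← Finset.sum_mul]
  congr 1
  · congr 1
    · exact Finset.sum_congr rfl fun j _ => by rw [hTrow]
    · rw [Finset.sum_comm]
      refine Finset.sum_congr rfl fun l _ => ?_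
      rw [← Finset.mul_sum, hTcol]
  · refine congrArg _ ?_
    rw [Finset.sum_comm]
    refine (Finset.sum_congr rfl fun l _ => ?_)
    rw [Finset.sum_mul]
    try exact Finset.sum_congr rfl fun j _ => by ring
end

section
/- Let μ ∈ ℝ^{n_s} and ν ∈ ℝ^{n_t} be probability vectors, T ∈ Π(μ,ν), and let D_s ∈ ℝ^{n_s×n_s} and D_t ∈ ℝ^{n_t×n_t} be arbitrary real matrices. Then the full Gromov–Wasserstein objective with squared ground cost decomposes as: ∑_{i,j=1}^{n_s} ∑_{k,l=1}^{n_t} (D_s(i,j) − D_t(k,l))² · T(i,k) · T(j,l) = ∑_{i,j} D_s(i,j)² μ(i) μ(j) + ∑_{k,l} D_t(k,l)² ν(k) ν(l) − 2·∑_{i,k} (D_s T D_tᵀ)(i,k) · T(i,k). -/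
/-- Decomposition of the full Gromov–Wasserstein objective with
squared ground cost:
`∑_{i,j,k,l} (D_s(i,j) − D_t(k,l))² T(i,k) T(j,l)
  = ∑_{i,j} D_s(i,j)² μ(i) μ(j) + ∑_{k,l} D_t(k,l)² ν(k) ν(l)
    − 2 ∑_{i,k} (D_s T D_tᵀ)(i,k) T(i,k)`. -/
theorem gw_objective_decomposition {ns nt : ℕ}
    (μ : Fin ns → ℝ) (ν : Fin nt → ℝ)
    (hμ0 : ∀ i, 0 ≤ μ i) (hμ1 : ∑ i, μ i = 1)
    (hν0 : ∀ k, 0 ≤ ν k) (hν1 : ∑ k, ν k = 1)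
    (T : Matrix (Fin ns) (Fin nt) ℝ)
    (hT0 : ∀ i k, 0 ≤ T i k)
    (hTrow : ∀ i, ∑ k, T i k = μ i)
    (hTcol : ∀ k, ∑ i, T i k = ν k)
    (Ds : Matrix (Fin ns) (Fin ns) ℝ) (Dt : Matrix (Fin nt) (Fin nt) ℝ) :
    ∑ i, ∑ j, ∑ k, ∑ l, (Ds i j - Dt k l) ^ 2 * T i k * T j l =
      (∑ i, ∑ j, Ds i j ^ 2 * μ i * μ j) + (∑ k, ∑ l, Dt k l ^ 2 * ν k * ν l)
        - 2 * ∑ i, ∑ k, (Ds * T * Dt.transpose) i k * T i k := by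
  have expand : ∀ (i j : Fin ns) (k l : Fin nt),
      (Ds i j - Dt k l) ^ 2 * T i k * T j l
        = Ds i j ^ 2 * (T i k * T j l) + Dt k l ^ 2 * (T i k * T j l)
          - 2 * (Ds i j * Dt k l * (T i k * T j l)) := by
    intros; ring
  have hA : ∑ i, ∑ j, ∑ k, ∑ l, Ds i j ^ 2 * (T i k * T j l)
      = ∑ i, ∑ j, Ds i j ^ 2 * μ i * μ j := by
    refine Finset.sum_congr rfl fun i _ => Finset.sum_congr rfl fun j _ => ?_
    simp_rw [← Finset.mul_sum, hTrow, ← Finset.sum_mul, hTrow, mul_assoc]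
  have hB : ∑ i, ∑ j, ∑ k, ∑ l, Dt k l ^ 2 * (T i k * T j l)
      = ∑ k, ∑ l, Dt k l ^ 2 * ν k * ν l := by
    calc ∑ i, ∑ j, ∑ k, ∑ l, Dt k l ^ 2 * (T i k * T j l)
        = ∑ i, ∑ k, ∑ j, ∑ l, Dt k l ^ 2 * (T i k * T j l) :=
          Finset.sum_congr rfl fun i _ => Finset.sum_comm
      _ = ∑ k, ∑ i, ∑ j, ∑ l, Dt k l ^ 2 * (T i k * T j l) := Finset.sum_comm
      _ = ∑ k, ∑ i, ∑ l, ∑ j, Dt k l ^ 2 * (T i k * T j l) :=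
          Finset.sum_congr rfl fun k _ => Finset.sum_congr rfl fun i _ =>
            Finset.sum_comm
      _ = ∑ k, ∑ l, ∑ i, ∑ j, Dt k l ^ 2 * (T i k * T j l) :=
          Finset.sum_congr rfl fun k _ => Finset.sum_comm
      _ = ∑ k, ∑ l, Dt k l ^ 2 * ν k * ν l := by
          refine Finset.sum_congr rfl fun k _ => Finset.sum_congr rfl fun l _ => ?_
          simp_rw [← Finset.mul_sum, hTcol, ← Finset.sum_mul, hTcol, mul_assoc]
  have hC : ∑ i, ∑ j, ∑ k, ∑ l, 2 * (Ds i j * Dt k l * (T i k * T j l))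
      = ∑ i, ∑ k, 2 * ((Ds * T * Dt.transpose) i k * T i k) := by
    refine Finset.sum_congr rfl fun i _ => ?_
    conv_lhs => rw [Finset.sum_comm]
    refine Finset.sum_congr rfl fun k _ => ?_
    simp_rw [Matrix.mul_apply, Matrix.transpose_apply, Finset.sum_mul, Finset.mul_sum]
    conv_lhs => rw [Finset.sum_comm]
    exact Finset.sum_congr rfl fun l _ => Finset.sum_congr rfl fun j _ => by ring
  simp_rw [expand, Finset.sum_sub_distrib, Finset.sum_add_distrib]
  rw [hA, hB, hC, Finset.mul_sum]
  simp_rw [Finset.mul_sum]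
end
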